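/- On a Finsler manifold (M,E) there exists a unique linear connection D° on TM satisfying: (a) D°J = 0; (b) D°C = v (i.e. D°_ζ C = vζ for all ζ); (c) D°Γ = 0 (equivalently D°h = D°v = 0); (d) D°_{Jζ}Jξ = J[Jζ,ξ] for all ζ,ξ; (e) the classical torsion satisfies T°(Jζ,ξ) = 0 for all ζ,ξ. This connection (the Berwald connection) is given explicitly by D°_{Jζ}Jξ = J[Jζ,ξ], D°_{hζ}Jξ = v[hζ,Jξ] and D°F = 0. -/
import Mathlib


/-!
Abstract formalization of the Klein–Grifone (KG-) approach to intrinsic Finsler geometry.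

`A` plays the role of the ℝ-algebra of smooth functions on the tangent bundle `TM`,
`V` plays the role of the Lie algebra of vector fields on `TM` (an `A`-module),
`act` is the directional derivative of functions along vector fields,
`J` is the natural almost tangent structure, `C` the canonical (Liouville) vector field,
`E` the energy function of the Finsler structure.
-/

noncomputable section

universe u

variable (A : Type u) (V : Type u)
variable [CommRing A] [Algebra ℝ A]
variable [LieRing V] [LieAlgebra ℝ V] [Module A V] [IsScalarTower ℝ A V]

/-- The basic Klein–Grifone data on `TM`. -/
structure KGPre where
  /-- directional derivative of functions along vector fields -/
  act : V → A → A
  act_add : ∀ (ζ : V) (f g : A), act ζ (f + g) = act ζ f + act ζ g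
  act_mul : ∀ (ζ : V) (f g : A), act ζ (f * g) = act ζ f * g + f * act ζ g
  act_addV : ∀ (ζ η : V) (f : A), act (ζ + η) f = act ζ f + act η f
  act_smulV : ∀ (f : A) (ζ : V) (g : A), act (f • ζ) g = f * act ζ g
  lie_smul_right : ∀ (ζ : V) (f : A) (η : V), ⁅ζ, f • η⁆ = act ζ f • η + f • ⁅ζ, η⁆
  /-- the natural almost tangent structure of `TM` -/
  J : V → V
  J_add : ∀ (ζ η : V), J (ζ + η) = J ζ + J η
  J_smulA : ∀ (f : A) (ζ : V), J (f • ζ) = f • J ζ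
  /-- `J² = 0` -/
  J_J : ∀ (ζ : V), J (J ζ) = 0
  /-- `[J,J] = 0` (vanishing of the Nijenhuis torsion of `J`) -/
  JJ_nijenhuis : ∀ (ζ η : V), ⁅J ζ, J η⁆ + J (J ⁅ζ, η⁆) - J ⁅J ζ, η⁆ - J ⁅ζ, J η⁆ = 0
  /-- the canonical (Liouville) vector field -/
  C : V
  /-- `[C,J] = -J` (Frölicher–Nijenhuis bracket) -/
  C_J : ∀ (ζ : V), ⁅C, J ζ⁆ - J ⁅C, ζ⁆ = - J ζ
  /-- the energy function -/
  E : A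
  /-- `ℒ_C E = 2E` : `E` is positively homogeneous of degree 2 -/
  E_hom : act C E = (2 : A) * E

namespace KGPre

variable {A V}
variable (𝔎 : KGPre A V)

/-- The horizontal projector `h = ½(I + Γ)` attached to a vector 1-form `Γ`. -/
def hpr (Γ : V → V) (ζ : V) : V := (2:ℝ)⁻¹ • (ζ + Γ ζ)

/-- The vertical projector `v = ½(I - Γ)` attached to a vector 1-form `Γ`. -/
def vpr (Γ : V → V) (ζ : V) : V := (2:ℝ)⁻¹ • (ζ - Γ ζ)

/-- The fundamental 2-form `Ω := d d_J E`. -/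
def Om (ζ η : V) : A :=
  𝔎.act ζ (𝔎.act (𝔎.J η) 𝔎.E) - 𝔎.act η (𝔎.act (𝔎.J ζ) 𝔎.E) - 𝔎.act (𝔎.J ⁅ζ, η⁆) 𝔎.E

/-- A nonlinear connection on `M`: a vector 1-form `Γ` on `TM` with `JΓ = J`, `ΓJ = -J`. -/
structure IsNonlinearConnection (Γ : V → V) : Prop where
  add : ∀ (ζ η : V), Γ (ζ + η) = Γ ζ + Γ η
  smulA : ∀ (f : A) (ζ : V), Γ (f • ζ) = f • Γ ζ
  J_comp : ∀ (ζ : V), 𝔎.J (Γ ζ) = 𝔎.J ζ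
  comp_J : ∀ (ζ : V), Γ (𝔎.J ζ) = - 𝔎.J ζ

/-- A nonlinear connection is homogeneous if `[C,Γ] = 0` (Frölicher–Nijenhuis bracket). -/
def Homogeneous (Γ : V → V) : Prop := ∀ (ζ : V), ⁅𝔎.C, Γ ζ⁆ - Γ ⁅𝔎.C, ζ⁆ = 0

/-- A nonlinear connection is conservative if `d_h E = 0`. -/
def Conservative (Γ : V → V) : Prop := ∀ (ζ : V), 𝔎.act (hpr Γ ζ) 𝔎.E = 0

/-- The torsion `t := ½[J,Γ]` of a nonlinear connection (Frölicher–Nijenhuis bracket). -/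
def nlTorsion (Γ : V → V) (ζ η : V) : V :=
  (2:ℝ)⁻¹ • (⁅𝔎.J ζ, Γ η⁆ + ⁅Γ ζ, 𝔎.J η⁆ + 𝔎.J (Γ ⁅ζ, η⁆) + Γ (𝔎.J ⁅ζ, η⁆)
    - 𝔎.J ⁅Γ ζ, η⁆ - 𝔎.J ⁅ζ, Γ η⁆ - Γ ⁅𝔎.J ζ, η⁆ - Γ ⁅ζ, 𝔎.J η⁆)

/-- A linear connection on `TM` (Koszul connection on vector fields of `TM`). -/
structure IsLinearConnection (D : V → V → V) : Prop where
  add_left : ∀ (ζ η ξ : V), D (ζ + η) ξ = D ζ ξ + D η ξ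
  smul_left : ∀ (f : A) (ζ ξ : V), D (f • ζ) ξ = f • D ζ ξ
  add_right : ∀ (ζ η ξ : V), D ζ (η + ξ) = D ζ η + D ζ ξ
  leibniz : ∀ (ζ : V) (f : A) (ξ : V), D ζ (f • ξ) = 𝔎.act ζ f • ξ + f • D ζ ξ

end KGPre

section
variable {A V}

/-- The classical torsion of a linear connection: `T(ζ,ξ) = D_ζ ξ - D_ξ ζ - [ζ,ξ]`. -/
def Tor (D : V → V → V) (ζ ξ : V) : V := D ζ ξ - D ξ ζ - ⁅ζ, ξ⁆

/-- The classical curvature `K(ζ,η)ξ = D_ζ D_η ξ - D_η D_ζ ξ - D_[ζ,η] ξ`. -/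
def Curv (D : V → V → V) (ζ η ξ : V) : V := D ζ (D η ξ) - D η (D ζ ξ) - D ⁅ζ, η⁆ ξ

/-- Covariant derivative of a vector-valued 2-tensor. -/
def covD2 (D : V → V → V) (T : V → V → V) (X ζ η : V) : V :=
  D X (T ζ η) - T (D X ζ) η - T ζ (D X η)

/-- Covariant derivative of a vector-valued 3-tensor. -/
def covD3 (D : V → V → V) (T : V → V → V → V) (X ζ η ξ : V) : V :=
  D X (T ζ η ξ) - T (D X ζ) η ξ - T ζ (D X η) ξ - T ζ η (D X ξ)

end

/-- A Finsler manifold `(M,E)` in the Klein–Grifone approach, together with its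
canonical spray `S`, its Barthel connection `Γ = [J,S]` and the associated almost
complex structure `F` (determined by `FJ = h`, `Fh = -J`). -/
structure FinslerKG extends KGPre A V where
  /-- `Ω` has maximal rank (nondegeneracy) -/
  Om_nondeg : ∀ (ζ : V), (∀ (η : V), toKGPre.Om ζ η = 0) → ζ = 0
  /-- the canonical spray -/
  S : V
  /-- `S` is a semispray: `JS = C` -/
  J_S : toKGPre.J S = toKGPre.C
  /-- `S` is homogeneous of degree 2: `[C,S] = S` -/
  S_hom : ⁅toKGPre.C, S⁆ = S
  /-- the Euler–Lagrange equation `i_S Ω = -dE` -/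
  spray_eq : ∀ (η : V), toKGPre.Om S η = - toKGPre.act η toKGPre.E
  /-- the Barthel connection -/
  Γ : V → V
  /-- `Γ = [J,S]` (Frölicher–Nijenhuis bracket) -/
  Γ_eq : ∀ (ζ : V), Γ ζ = ⁅toKGPre.J ζ, S⁆ - toKGPre.J ⁅ζ, S⁆
  /-- the almost complex structure attached to the Barthel connection -/
  F : V → V
  F_add : ∀ (ζ η : V), F (ζ + η) = F ζ + F η
  F_smulA : ∀ (f : A) (ζ : V), F (f • ζ) = f • F ζ
  /-- `F ∘ J = h` -/
  F_J : ∀ (ζ : V), F (toKGPre.J ζ) = (2:ℝ)⁻¹ • (ζ + Γ ζ)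
  /-- `F ∘ h = -J` -/
  F_h : ∀ (ζ : V), F ((2:ℝ)⁻¹ • (ζ + Γ ζ)) = - toKGPre.J ζ

namespace FinslerKG

variable {A V}
variable (𝔉 : FinslerKG A V)

/-- The fundamental 2-form. -/
def Om (ζ η : V) : A := 𝔉.toKGPre.Om ζ η

/-- The horizontal projector of the Barthel connection. -/
def h (ζ : V) : V := (2:ℝ)⁻¹ • (ζ + 𝔉.Γ ζ)

/-- The vertical projector of the Barthel connection. -/
def v (ζ : V) : V := (2:ℝ)⁻¹ • (ζ - 𝔉.Γ ζ)

/-- The metric `g(ζ,ξ) := Ω(ζ,Fξ)` on `T(TM)`. -/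
def g (ζ ξ : V) : A := 𝔉.Om ζ (𝔉.F ξ)

/-- The curvature `ℜ := -½[h,h]` of the Barthel connection. -/
def Rbar (ζ η : V) : V :=
  -(⁅𝔉.h ζ, 𝔉.h η⁆ + 𝔉.h (𝔉.h ⁅ζ, η⁆) - 𝔉.h ⁅𝔉.h ζ, η⁆ - 𝔉.h ⁅ζ, 𝔉.h η⁆)

/-- The h-curvature `R(ζ,η)ξ = K(hζ,hη)Jξ` of a linear connection. -/
def hR (D : V → V → V) (ζ η ξ : V) : V := Curv D (𝔉.h ζ) (𝔉.h η) (𝔉.toKGPre.J ξ)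

/-- The hv-curvature `P(ζ,η)ξ = K(hζ,Jη)Jξ` of a linear connection. -/
def hP (D : V → V → V) (ζ η ξ : V) : V := Curv D (𝔉.h ζ) (𝔉.toKGPre.J η) (𝔉.toKGPre.J ξ)

/-- The v-curvature `Q(ζ,η)ξ = K(Jζ,Jη)Jξ` of a linear connection. -/
def vQ (D : V → V → V) (ζ η ξ : V) : V :=
  Curv D (𝔉.toKGPre.J ζ) (𝔉.toKGPre.J η) (𝔉.toKGPre.J ξ)

/-- The Berwald connection, characterized by its explicit formulas
`D°_{Jζ}Jξ = J[Jζ,ξ]`, `D°_{hζ}Jξ = v[hζ,Jξ]`, `D°F = 0`. -/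
def IsBerwaldConn (D : V → V → V) : Prop :=
  𝔉.toKGPre.IsLinearConnection D ∧
  (∀ (ζ ξ : V), D (𝔉.toKGPre.J ζ) (𝔉.toKGPre.J ξ) = 𝔉.toKGPre.J ⁅𝔉.toKGPre.J ζ, ξ⁆) ∧
  (∀ (ζ ξ : V), D (𝔉.h ζ) (𝔉.toKGPre.J ξ) = 𝔉.v ⁅𝔉.h ζ, 𝔉.toKGPre.J ξ⁆) ∧
  (∀ (ζ ξ : V), D ζ (𝔉.F ξ) = 𝔉.F (D ζ ξ))

end FinslerKG

section
variable {A V}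

/-- The first and second Cartan tensors `𝒞`, `𝒞'`: semi-basic vector 2-forms
determined by `Ω(𝒞(ζ,η),ξ) = ½(ℒ_{Jζ}(J*g))(η,ξ)` and
`Ω(𝒞'(ζ,η),ξ) = ½(ℒ_{hζ}g)(Jη,Jξ)`, where `(J*g)(η,ξ) = g(Jη,Jξ)`. -/
structure CartanTensors (𝔉 : FinslerKG A V) where
  CT : V → V → V
  CT' : V → V → V
  CT_vertValued : ∀ (ζ η : V), 𝔉.toKGPre.J (CT ζ η) = 0
  CT_semibasic_left : ∀ (ζ η : V), CT (𝔉.toKGPre.J ζ) η = 0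
  CT_semibasic_right : ∀ (ζ η : V), CT ζ (𝔉.toKGPre.J η) = 0
  CT'_vertValued : ∀ (ζ η : V), 𝔉.toKGPre.J (CT' ζ η) = 0
  CT'_semibasic_left : ∀ (ζ η : V), CT' (𝔉.toKGPre.J ζ) η = 0
  CT'_semibasic_right : ∀ (ζ η : V), CT' ζ (𝔉.toKGPre.J η) = 0
  CT_eq : ∀ (ζ η ξ : V), 𝔉.Om (CT ζ η) ξ =
    (2:ℝ)⁻¹ • (𝔉.toKGPre.act (𝔉.toKGPre.J ζ) (𝔉.g (𝔉.toKGPre.J η) (𝔉.toKGPre.J ξ))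
      - 𝔉.g (𝔉.toKGPre.J ⁅𝔉.toKGPre.J ζ, η⁆) (𝔉.toKGPre.J ξ)
      - 𝔉.g (𝔉.toKGPre.J η) (𝔉.toKGPre.J ⁅𝔉.toKGPre.J ζ, ξ⁆))
  CT'_eq : ∀ (ζ η ξ : V), 𝔉.Om (CT' ζ η) ξ =
    (2:ℝ)⁻¹ • (𝔉.toKGPre.act (𝔉.h ζ) (𝔉.g (𝔉.toKGPre.J η) (𝔉.toKGPre.J ξ))
      - 𝔉.g ⁅𝔉.h ζ, 𝔉.toKGPre.J η⁆ (𝔉.toKGPre.J ξ)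
      - 𝔉.g (𝔉.toKGPre.J η) ⁅𝔉.h ζ, 𝔉.toKGPre.J ξ⁆)

end

namespace FinslerKG

variable {A V}
variable (𝔉 : FinslerKG A V)

/-- The Cartan connection, characterized by its explicit formulas
`D_{Jζ}Jξ = J[Jζ,ξ] + 𝒞(ζ,ξ)`, `D_{hζ}Jξ = v[hζ,Jξ] + 𝒞'(ζ,ξ)`, `DF = 0`. -/
def IsCartanConn (𝒯 : CartanTensors 𝔉) (D : V → V → V) : Prop :=
  𝔉.toKGPre.IsLinearConnection D ∧
  (∀ (ζ ξ : V), D (𝔉.toKGPre.J ζ) (𝔉.toKGPre.J ξ) = 𝔉.toKGPre.J ⁅𝔉.toKGPre.J ζ, ξ⁆ + 𝒯.CT ζ ξ) ∧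
  (∀ (ζ ξ : V), D (𝔉.h ζ) (𝔉.toKGPre.J ξ) = 𝔉.v ⁅𝔉.h ζ, 𝔉.toKGPre.J ξ⁆ + 𝒯.CT' ζ ξ) ∧
  (∀ (ζ ξ : V), D ζ (𝔉.F ξ) = 𝔉.F (D ζ ξ))

/-- The Hashiguchi connection, characterized by its explicit formulas
`D⋄_{Jζ}Jξ = J[Jζ,ξ] + 𝒞(ζ,ξ)`, `D⋄_{hζ}Jξ = v[hζ,Jξ]`, `D⋄F = 0`. -/
def IsHashiguchiConn (𝒯 : CartanTensors 𝔉) (D : V → V → V) : Prop :=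
  𝔉.toKGPre.IsLinearConnection D ∧
  (∀ (ζ ξ : V), D (𝔉.toKGPre.J ζ) (𝔉.toKGPre.J ξ) = 𝔉.toKGPre.J ⁅𝔉.toKGPre.J ζ, ξ⁆ + 𝒯.CT ζ ξ) ∧
  (∀ (ζ ξ : V), D (𝔉.h ζ) (𝔉.toKGPre.J ξ) = 𝔉.v ⁅𝔉.h ζ, 𝔉.toKGPre.J ξ⁆) ∧
  (∀ (ζ ξ : V), D ζ (𝔉.F ξ) = 𝔉.F (D ζ ξ))

end FinslerKG


section Statement
variable {A V : Type u} [CommRing A] [Algebra ℝ A]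
variable [LieRing V] [LieAlgebra ℝ V] [Module A V] [IsScalarTower ℝ A V]

/-- The axioms of Theorem 2.1 characterizing the Berwald connection:
(a) `D°J = 0`; (b) `D°C = v`; (c) `D°Γ = 0`; (d) `D°_{Jζ}Jξ = J[Jζ,ξ]`;
(e) `T°(Jζ,ξ) = 0`. -/
def BerwaldAxioms (𝔉 : FinslerKG A V) (D : V → V → V) : Prop :=
  𝔉.toKGPre.IsLinearConnection D ∧
  (∀ ζ ξ : V, D ζ (𝔉.toKGPre.J ξ) = 𝔉.toKGPre.J (D ζ ξ)) ∧
  (∀ ζ : V, D ζ 𝔉.toKGPre.C = 𝔉.v ζ) ∧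
  (∀ ζ ξ : V, D ζ (𝔉.Γ ξ) = 𝔉.Γ (D ζ ξ)) ∧
  (∀ ζ ξ : V, D (𝔉.toKGPre.J ζ) (𝔉.toKGPre.J ξ) = 𝔉.toKGPre.J ⁅𝔉.toKGPre.J ζ, ξ⁆) ∧
  (∀ ζ ξ : V, Tor D (𝔉.toKGPre.J ζ) ξ = 0)

set_option linter.unusedSectionVars false

namespace BerwaldAux

variable {A V : Type u} [CommRing A] [Algebra ℝ A]
variable [LieRing V] [LieAlgebra ℝ V] [Module A V] [IsScalarTower ℝ A V]
variable (𝓕 : FinslerKG A V)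

/-! #### Generic additive-map helpers -/

private lemma lflip (x y : V) : ⁅x, y⁆ = -⁅y, x⁆ := (lie_skew x y).symm

private lemma amap_zero {g : V → V} (hg : ∀ x y, g (x + y) = g x + g y) : g 0 = 0 := by
  have h := hg 0 0
  rw [zero_add] at h
  exact left_eq_add.mp h

private lemma amap_neg {g : V → V} (hg : ∀ x y, g (x + y) = g x + g y) (x : V) :
    g (-x) = -g x := by
  have h := hg (-x) x
  rw [neg_add_cancel, amap_zero hg] at h
  exact eq_neg_of_add_eq_zero_left h.symm

private lemma amap_sub {g : V → V} (hg : ∀ x y, g (x + y) = g x + g y) (x y : V) :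
    g (x - y) = g x - g y := by
  rw [sub_eq_add_neg, hg, amap_neg hg, ← sub_eq_add_neg]

private lemma half_half (x : V) : (2:ℝ)⁻¹ • x + (2:ℝ)⁻¹ • x = x := by
  rw [← two_smul ℝ, smul_smul]; norm_num

private lemma half_double (x : V) : (2:ℝ)⁻¹ • (x + x) = x := by
  rw [← two_smul ℝ, smul_smul]; norm_num

/-! #### Basic properties of `J` and `F` -/

lemma J_zero : 𝓕.toKGPre.J 0 = 0 := amap_zero 𝓕.toKGPre.J_add

lemma J_neg (x : V) : 𝓕.toKGPre.J (-x) = -𝓕.toKGPre.J x := amap_neg 𝓕.toKGPre.J_add x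

lemma J_sub (x y : V) : 𝓕.toKGPre.J (x - y) = 𝓕.toKGPre.J x - 𝓕.toKGPre.J y :=
  amap_sub 𝓕.toKGPre.J_add x y

lemma J_real (r : ℝ) (x : V) : 𝓕.toKGPre.J (r • x) = r • 𝓕.toKGPre.J x := by
  rw [← algebraMap_smul A r x, 𝓕.toKGPre.J_smulA, algebraMap_smul]

lemma F_zero : 𝓕.F 0 = 0 := amap_zero 𝓕.F_add

lemma lie_smul_left (f : A) (x y : V) :
    ⁅f • x, y⁆ = f • ⁅x, y⁆ - 𝓕.toKGPre.act y f • x := by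
  rw [lflip (f • x) y, 𝓕.toKGPre.lie_smul_right, lflip y x, smul_neg]
  abel

/-- The Nijenhuis identity in its usable form. -/
lemma nij (x y : V) :
    ⁅𝓕.toKGPre.J x, 𝓕.toKGPre.J y⁆
      = 𝓕.toKGPre.J ⁅𝓕.toKGPre.J x, y⁆ + 𝓕.toKGPre.J ⁅x, 𝓕.toKGPre.J y⁆ := by
  have h := 𝓕.toKGPre.JJ_nijenhuis x y
  rw [𝓕.toKGPre.J_J ⁅x, y⁆, add_zero, sub_sub, sub_eq_zero] at h
  exact h

/-- `J[Jx,S] = Jx`. -/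
lemma JJS (x : V) : 𝓕.toKGPre.J ⁅𝓕.toKGPre.J x, 𝓕.S⁆ = 𝓕.toKGPre.J x := by
  have h1 := nij 𝓕 x 𝓕.S
  rw [𝓕.J_S] at h1
  have h2 := 𝓕.toKGPre.C_J x
  rw [sub_eq_iff_eq_add] at h2
  have h3 : ⁅𝓕.toKGPre.J x, 𝓕.toKGPre.C⁆
      = 𝓕.toKGPre.J x + 𝓕.toKGPre.J ⁅x, 𝓕.toKGPre.C⁆ := by
    rw [lflip (𝓕.toKGPre.J x) 𝓕.toKGPre.C, lflip x 𝓕.toKGPre.C, J_neg, h2]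
    abel
  rw [h3] at h1
  exact (add_right_cancel h1).symm

/-! #### Properties of `Γ`, `h`, `v` -/

lemma Γ_add (x y : V) : 𝓕.Γ (x + y) = 𝓕.Γ x + 𝓕.Γ y := by
  rw [𝓕.Γ_eq, 𝓕.Γ_eq, 𝓕.Γ_eq, 𝓕.toKGPre.J_add, add_lie, add_lie, 𝓕.toKGPre.J_add]
  abel

lemma Γ_smulA (f : A) (x : V) : 𝓕.Γ (f • x) = f • 𝓕.Γ x := by
  rw [𝓕.Γ_eq, 𝓕.Γ_eq, 𝓕.toKGPre.J_smulA, lie_smul_left 𝓕, lie_smul_left 𝓕,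
    J_sub, 𝓕.toKGPre.J_smulA, 𝓕.toKGPre.J_smulA, smul_sub]
  abel

lemma J_Γ (x : V) : 𝓕.toKGPre.J (𝓕.Γ x) = 𝓕.toKGPre.J x := by
  rw [𝓕.Γ_eq, J_sub, JJS, 𝓕.toKGPre.J_J, sub_zero]

lemma Γ_J (x : V) : 𝓕.Γ (𝓕.toKGPre.J x) = -𝓕.toKGPre.J x := by
  rw [𝓕.Γ_eq, 𝓕.toKGPre.J_J, zero_lie, JJS, zero_sub]

lemma h_def (x : V) : 𝓕.h x = (2:ℝ)⁻¹ • (x + 𝓕.Γ x) := rfl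

lemma v_def (x : V) : 𝓕.v x = (2:ℝ)⁻¹ • (x - 𝓕.Γ x) := rfl

lemma hv_add (x : V) : 𝓕.h x + 𝓕.v x = x := by
  rw [h_def, v_def, ← smul_add]
  have h2 : (x + 𝓕.Γ x) + (x - 𝓕.Γ x) = (2:ℝ) • x := by rw [two_smul]; abel
  rw [h2, smul_smul]
  norm_num

lemma h_sub_v (x : V) : 𝓕.h x - 𝓕.v x = 𝓕.Γ x := by
  rw [h_def, v_def, ← smul_sub]
  have h2 : (x + 𝓕.Γ x) - (x - 𝓕.Γ x) = (2:ℝ) • 𝓕.Γ x := by rw [two_smul]; abel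
  rw [h2, smul_smul]
  norm_num

lemma v_eq (x : V) : 𝓕.v x = x - 𝓕.h x := eq_sub_of_add_eq' (hv_add 𝓕 x)

lemma h_eq (x : V) : 𝓕.h x = x - 𝓕.v x := eq_sub_of_add_eq (hv_add 𝓕 x)

lemma h_add (x y : V) : 𝓕.h (x + y) = 𝓕.h x + 𝓕.h y := by
  rw [h_def, h_def, h_def, Γ_add, ← smul_add]
  congr 1
  abel

lemma h_smulA (f : A) (x : V) : 𝓕.h (f • x) = f • 𝓕.h x := by
  rw [h_def, h_def, Γ_smulA, ← smul_add, smul_comm]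

lemma v_add (x y : V) : 𝓕.v (x + y) = 𝓕.v x + 𝓕.v y := by
  rw [v_def, v_def, v_def, Γ_add, ← smul_add]
  congr 1
  abel

lemma v_smulA (f : A) (x : V) : 𝓕.v (f • x) = f • 𝓕.v x := by
  rw [v_def, v_def, Γ_smulA, ← smul_sub, smul_comm]

lemma v_zero : 𝓕.v 0 = 0 := amap_zero (v_add 𝓕)

lemma v_neg (x : V) : 𝓕.v (-x) = -𝓕.v x := amap_neg (v_add 𝓕) x

lemma v_sub (x y : V) : 𝓕.v (x - y) = 𝓕.v x - 𝓕.v y := amap_sub (v_add 𝓕) x y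

lemma J_h (x : V) : 𝓕.toKGPre.J (𝓕.h x) = 𝓕.toKGPre.J x := by
  rw [h_def, J_real, 𝓕.toKGPre.J_add, J_Γ, half_double]

lemma J_v (x : V) : 𝓕.toKGPre.J (𝓕.v x) = 0 := by
  rw [v_def, J_real, J_sub, J_Γ, sub_self, smul_zero]

lemma h_J (x : V) : 𝓕.h (𝓕.toKGPre.J x) = 0 := by
  rw [h_def, Γ_J, add_neg_cancel, smul_zero]

lemma v_J (x : V) : 𝓕.v (𝓕.toKGPre.J x) = 𝓕.toKGPre.J x := by
  rw [v_eq, h_J, sub_zero]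

/-! #### The almost complex structure `F` pins everything down -/

lemma F_J' (x : V) : 𝓕.F (𝓕.toKGPre.J x) = 𝓕.h x := 𝓕.F_J x

lemma F_h' (x : V) : 𝓕.F (𝓕.h x) = -𝓕.toKGPre.J x := 𝓕.F_h x

lemma h_h (x : V) : 𝓕.h (𝓕.h x) = 𝓕.h x := by
  rw [← F_J' 𝓕 (𝓕.h x), J_h, F_J']

lemma h_ker {w : V} (hw : 𝓕.toKGPre.J w = 0) : 𝓕.h w = 0 := by
  rw [← F_J' 𝓕 w, hw, F_zero]

lemma v_ker {w : V} (hw : 𝓕.toKGPre.J w = 0) : 𝓕.v w = w := by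
  rw [v_eq, h_ker 𝓕 hw, sub_zero]

lemma v_h (x : V) : 𝓕.v (𝓕.h x) = 0 := by
  rw [v_eq, h_h, sub_self]

lemma h_v (x : V) : 𝓕.h (𝓕.v x) = 0 := h_ker 𝓕 (J_v 𝓕 x)

lemma v_v (x : V) : 𝓕.v (𝓕.v x) = 𝓕.v x := v_ker 𝓕 (J_v 𝓕 x)

lemma Γ_h (x : V) : 𝓕.Γ (𝓕.h x) = 𝓕.h x := by
  rw [← h_sub_v 𝓕 (𝓕.h x), v_h, sub_zero, h_h]

lemma Γ_ker {w : V} (hw : 𝓕.toKGPre.J w = 0) : 𝓕.Γ w = -w := by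
  rw [← h_sub_v 𝓕 w, h_ker 𝓕 hw, v_ker 𝓕 hw, zero_sub]

lemma v_Γ (x : V) : 𝓕.v (𝓕.Γ x) = -𝓕.v x := by
  rw [← h_sub_v 𝓕 x, v_sub, v_h, v_v, zero_sub]

/-- The key lemma: every vertical vector is in the image of `J`, explicitly. -/
lemma vert_JS {w : V} (hw : 𝓕.toKGPre.J w = 0) : 𝓕.toKGPre.J ⁅w, 𝓕.S⁆ = w := by
  have h1 : 𝓕.Γ w = -𝓕.toKGPre.J ⁅w, 𝓕.S⁆ := by
    rw [𝓕.Γ_eq, hw, zero_lie, zero_sub]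
  have h2 := Γ_ker 𝓕 hw
  rw [h1] at h2
  exact neg_inj.mp h2

lemma v_im (x : V) : 𝓕.toKGPre.J ⁅𝓕.v x, 𝓕.S⁆ = 𝓕.v x := vert_JS 𝓕 (J_v 𝓕 x)

lemma Jlie_vert {w : V} (hw : 𝓕.toKGPre.J w = 0) (x : V) :
    𝓕.toKGPre.J ⁅𝓕.toKGPre.J x, w⁆ = 0 := by
  have h := nij 𝓕 x w
  rw [hw, lie_zero, lie_zero, J_zero, add_zero] at h
  exact h.symm

lemma Jlie_vert' {w : V} (hw : 𝓕.toKGPre.J w = 0) (x : V) :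
    𝓕.toKGPre.J ⁅w, 𝓕.toKGPre.J x⁆ = 0 := by
  rw [lflip w (𝓕.toKGPre.J x), J_neg, Jlie_vert 𝓕 hw x, neg_zero]

lemma Jlie_vert2 {w w' : V} (hw : 𝓕.toKGPre.J w = 0) (hw' : 𝓕.toKGPre.J w' = 0) :
    𝓕.toKGPre.J ⁅w, w'⁆ = 0 := by
  have h : ⁅w, w'⁆ = ⁅𝓕.toKGPre.J ⁅w, 𝓕.S⁆, w'⁆ := by rw [vert_JS 𝓕 hw]
  rw [h]
  exact Jlie_vert 𝓕 hw' ⁅w, 𝓕.S⁆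

lemma F_vert {w : V} (hw : 𝓕.toKGPre.J w = 0) : 𝓕.F w = 𝓕.h ⁅w, 𝓕.S⁆ := by
  conv_lhs => rw [← vert_JS 𝓕 hw]
  exact F_J' 𝓕 ⁅w, 𝓕.S⁆

lemma JF_vert {w : V} (hw : 𝓕.toKGPre.J w = 0) : 𝓕.toKGPre.J (𝓕.F w) = w := by
  rw [F_vert 𝓕 hw, J_h, vert_JS 𝓕 hw]

lemma Γ_F_vert {w : V} (hw : 𝓕.toKGPre.J w = 0) : 𝓕.Γ (𝓕.F w) = 𝓕.F w := by
  rw [F_vert 𝓕 hw, Γ_h]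

/-! #### The spray and homogeneity -/

lemma Γ_S : 𝓕.Γ 𝓕.S = 𝓕.S := by
  rw [𝓕.Γ_eq, 𝓕.J_S, 𝓕.S_hom, lie_self, J_zero, sub_zero]

lemma h_S : 𝓕.h 𝓕.S = 𝓕.S := by
  rw [h_def, Γ_S, half_double]

lemma Γ_homog (x : V) : ⁅𝓕.toKGPre.C, 𝓕.Γ x⁆ = 𝓕.Γ ⁅𝓕.toKGPre.C, x⁆ := by
  have cjx : ⁅𝓕.toKGPre.C, 𝓕.toKGPre.J x⁆
      = 𝓕.toKGPre.J ⁅𝓕.toKGPre.C, x⁆ - 𝓕.toKGPre.J x := by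
    have h := 𝓕.toKGPre.C_J x
    rw [sub_eq_iff_eq_add] at h
    rw [h]; abel
  have cjxs : ⁅𝓕.toKGPre.C, 𝓕.toKGPre.J ⁅x, 𝓕.S⁆⁆
      = 𝓕.toKGPre.J ⁅𝓕.toKGPre.C, ⁅x, 𝓕.S⁆⁆ - 𝓕.toKGPre.J ⁅x, 𝓕.S⁆ := by
    have h := 𝓕.toKGPre.C_J ⁅x, 𝓕.S⁆
    rw [sub_eq_iff_eq_add] at h
    rw [h]; abel
  rw [𝓕.Γ_eq x, 𝓕.Γ_eq ⁅𝓕.toKGPre.C, x⁆, lie_sub, leibniz_lie, cjx, cjxs,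
    leibniz_lie 𝓕.toKGPre.C x 𝓕.S, 𝓕.S_hom, sub_lie, 𝓕.toKGPre.J_add]
  abel

lemma h_homog (x : V) : ⁅𝓕.toKGPre.C, 𝓕.h x⁆ = 𝓕.h ⁅𝓕.toKGPre.C, x⁆ := by
  rw [h_def, h_def, lie_smul, lie_add, Γ_homog]

lemma v_hC (x : V) : 𝓕.v ⁅𝓕.h x, 𝓕.toKGPre.C⁆ = 0 := by
  rw [lflip (𝓕.h x) 𝓕.toKGPre.C, h_homog, v_neg, v_h, neg_zero]

/-! #### The explicit Berwald connection -/

/-- `sgm x = [vx, S]`, so that `J (sgm x) = vx`. -/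
def sgm (x : V) : V := ⁅𝓕.v x, 𝓕.S⁆

/-- `nab x y`, the intended value of `D x (Jy)`. -/
def nab (x y : V) : V :=
  𝓕.v ⁅𝓕.h x, 𝓕.toKGPre.J y⁆ + 𝓕.toKGPre.J ⁅𝓕.v x, y⁆

/-- The Berwald connection: `D x y = F(nab x y) + nab x (sgm y)`. -/
def Ber (x y : V) : V := 𝓕.F (nab 𝓕 x y) + nab 𝓕 x (sgm 𝓕 y)

lemma J_sgm (x : V) : 𝓕.toKGPre.J (sgm 𝓕 x) = 𝓕.v x := v_im 𝓕 x

lemma J_nab (x y : V) : 𝓕.toKGPre.J (nab 𝓕 x y) = 0 := by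
  simp only [nab]
  rw [𝓕.toKGPre.J_add, J_v, 𝓕.toKGPre.J_J, add_zero]

lemma J_Ber (x y : V) : 𝓕.toKGPre.J (Ber 𝓕 x y) = nab 𝓕 x y := by
  simp only [Ber]
  rw [𝓕.toKGPre.J_add, JF_vert 𝓕 (J_nab 𝓕 x y), J_nab, add_zero]

lemma nab_add_right (x y z : V) : nab 𝓕 x (y + z) = nab 𝓕 x y + nab 𝓕 x z := by
  simp only [nab]
  rw [𝓕.toKGPre.J_add, lie_add, lie_add, v_add, 𝓕.toKGPre.J_add]
  abel

lemma nab_sub_right (x y z : V) : nab 𝓕 x (y - z) = nab 𝓕 x y - nab 𝓕 x z :=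
  amap_sub (nab_add_right 𝓕 x) y z

lemma nab_neg_right (x y : V) : nab 𝓕 x (-y) = -nab 𝓕 x y :=
  amap_neg (nab_add_right 𝓕 x) y

lemma nab_J_right (x y : V) : nab 𝓕 x (𝓕.toKGPre.J y) = 0 := by
  simp only [nab]
  rw [𝓕.toKGPre.J_J, lie_zero, v_zero, Jlie_vert' 𝓕 (J_v 𝓕 x) y, add_zero]

lemma nab_v_right (x y : V) : nab 𝓕 x (𝓕.v y) = 0 := by
  simp only [nab]
  rw [J_v, lie_zero, v_zero, Jlie_vert2 𝓕 (J_v 𝓕 x) (J_v 𝓕 y), add_zero]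

/-- The fundamental computation: `Ber x (Jy) = nab x y`. -/
lemma Ber_J_right (x y : V) : Ber 𝓕 x (𝓕.toKGPre.J y) = nab 𝓕 x y := by
  have hvert : 𝓕.toKGPre.J (⁅𝓕.toKGPre.J y, 𝓕.S⁆ - y) = 0 := by
    rw [J_sub, JJS, sub_self]
  have h0 := Jlie_vert2 𝓕 (J_v 𝓕 x) hvert
  rw [lie_sub, J_sub, sub_eq_zero] at h0
  simp only [Ber]
  rw [nab_J_right, F_zero, zero_add]
  simp only [sgm, nab]
  rw [v_J, JJS, h0]

/-- Axiom (a) for `Ber`. -/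
lemma Ber_a (x y : V) : Ber 𝓕 x (𝓕.toKGPre.J y) = 𝓕.toKGPre.J (Ber 𝓕 x y) := by
  rw [Ber_J_right, J_Ber]

/-- Axiom (b) for `Ber`. -/
lemma Ber_b (x : V) : Ber 𝓕 x 𝓕.toKGPre.C = 𝓕.v x := by
  rw [← 𝓕.J_S, Ber_J_right]
  simp only [nab]
  rw [𝓕.J_S, v_hC, v_im, zero_add]

lemma nab_Γ_right (x y : V) : nab 𝓕 x (𝓕.Γ y) = nab 𝓕 x y := by
  have hvert : 𝓕.toKGPre.J (𝓕.Γ y - y) = 0 := by rw [J_sub, J_Γ, sub_self]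
  have h0 := Jlie_vert2 𝓕 (J_v 𝓕 x) hvert
  rw [lie_sub, J_sub, sub_eq_zero] at h0
  simp only [nab]
  rw [J_Γ, h0]

lemma sgm_Γ (y : V) : sgm 𝓕 (𝓕.Γ y) = -sgm 𝓕 y := by
  simp only [sgm]
  rw [v_Γ, neg_lie]

/-- Axiom (c) for `Ber`. -/
lemma Ber_c (x y : V) : Ber 𝓕 x (𝓕.Γ y) = 𝓕.Γ (Ber 𝓕 x y) := by
  simp only [Ber]
  rw [nab_Γ_right, sgm_Γ, nab_neg_right, Γ_add, Γ_F_vert 𝓕 (J_nab 𝓕 x y),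
    Γ_ker 𝓕 (J_nab 𝓕 x (sgm 𝓕 y))]

/-- Axiom (d) for `Ber`. -/
lemma Ber_d (x y : V) :
    Ber 𝓕 (𝓕.toKGPre.J x) (𝓕.toKGPre.J y) = 𝓕.toKGPre.J ⁅𝓕.toKGPre.J x, y⁆ := by
  rw [Ber_J_right]
  simp only [nab]
  rw [h_J, zero_lie, v_zero, v_J, zero_add]

/-- Value of `Ber` in a vertical direction. -/
lemma Ber_Jdir (x y : V) :
    Ber 𝓕 (𝓕.toKGPre.J x) y
      = 𝓕.h ⁅𝓕.toKGPre.J x, y⁆ + 𝓕.toKGPre.J ⁅𝓕.toKGPre.J x, sgm 𝓕 y⁆ := by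
  simp only [Ber, nab]
  rw [h_J, zero_lie, zero_lie, v_zero, v_J, zero_add, zero_add, F_J']

lemma Jlie_sgm (x y : V) :
    𝓕.toKGPre.J ⁅𝓕.toKGPre.J x, sgm 𝓕 y⁆
      = ⁅𝓕.toKGPre.J x, 𝓕.v y⁆ - 𝓕.toKGPre.J ⁅x, 𝓕.v y⁆ := by
  have h := nij 𝓕 x (sgm 𝓕 y)
  rw [J_sgm] at h
  exact eq_sub_iff_add_eq.mpr h.symm

/-- Axiom (e) for `Ber`. -/
lemma Ber_e (x y : V) : Tor (Ber 𝓕) (𝓕.toKGPre.J x) y = 0 := by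
  simp only [Tor]
  rw [Ber_Jdir, Ber_J_right, Jlie_sgm]
  simp only [nab]
  have j5 : ⁅𝓕.toKGPre.J x, 𝓕.v y⁆ = 𝓕.v ⁅𝓕.toKGPre.J x, 𝓕.v y⁆ :=
    (v_ker 𝓕 (Jlie_vert 𝓕 (J_v 𝓕 y) x)).symm
  rw [j5]
  have j1 : 𝓕.toKGPre.J ⁅𝓕.v y, x⁆ = -𝓕.toKGPre.J ⁅x, 𝓕.v y⁆ := by
    rw [lflip (𝓕.v y) x, J_neg]
  rw [j1]
  have j2 : 𝓕.h ⁅𝓕.toKGPre.J x, y⁆ = ⁅𝓕.toKGPre.J x, y⁆ - 𝓕.v ⁅𝓕.toKGPre.J x, y⁆ :=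
    h_eq 𝓕 _
  rw [j2]
  have j3 : 𝓕.v ⁅𝓕.h y, 𝓕.toKGPre.J x⁆ = -𝓕.v ⁅𝓕.toKGPre.J x, 𝓕.h y⁆ := by
    rw [lflip (𝓕.h y) (𝓕.toKGPre.J x), v_neg]
  rw [j3]
  have j4 : 𝓕.v ⁅𝓕.toKGPre.J x, y⁆
      = 𝓕.v ⁅𝓕.toKGPre.J x, 𝓕.h y⁆ + 𝓕.v ⁅𝓕.toKGPre.J x, 𝓕.v y⁆ := by
    rw [← v_add, ← lie_add, hv_add]
  rw [j4]
  abel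

lemma nab_add_left (x x' y : V) : nab 𝓕 (x + x') y = nab 𝓕 x y + nab 𝓕 x' y := by
  simp only [nab]
  rw [h_add, add_lie, v_add, v_add, add_lie, 𝓕.toKGPre.J_add]
  abel

lemma Ber_add_left (x x' y : V) : Ber 𝓕 (x + x') y = Ber 𝓕 x y + Ber 𝓕 x' y := by
  simp only [Ber]
  rw [nab_add_left, nab_add_left, 𝓕.F_add]
  abel

lemma nab_smul_left (f : A) (x y : V) : nab 𝓕 (f • x) y = f • nab 𝓕 x y := by
  simp only [nab]
  rw [h_smulA, v_smulA, lie_smul_left 𝓕, lie_smul_left 𝓕, v_sub, v_smulA, v_smulA, v_h,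
    smul_zero, sub_zero, J_sub, 𝓕.toKGPre.J_smulA, 𝓕.toKGPre.J_smulA, J_v, smul_zero,
    sub_zero, smul_add]

lemma Ber_smul_left (f : A) (x y : V) : Ber 𝓕 (f • x) y = f • Ber 𝓕 x y := by
  simp only [Ber]
  rw [nab_smul_left, nab_smul_left, 𝓕.F_smulA, ← smul_add]

lemma sgm_add (y z : V) : sgm 𝓕 (y + z) = sgm 𝓕 y + sgm 𝓕 z := by
  simp only [sgm]
  rw [v_add, add_lie]

lemma Ber_add_right (x y z : V) : Ber 𝓕 x (y + z) = Ber 𝓕 x y + Ber 𝓕 x z := by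
  simp only [Ber]
  rw [nab_add_right, sgm_add, nab_add_right, 𝓕.F_add]
  abel

lemma nab_leibniz (x : V) (f : A) (y : V) :
    nab 𝓕 x (f • y) = f • nab 𝓕 x y + 𝓕.toKGPre.act x f • 𝓕.toKGPre.J y := by
  simp only [nab]
  rw [𝓕.toKGPre.J_smulA, 𝓕.toKGPre.lie_smul_right, 𝓕.toKGPre.lie_smul_right, v_add,
    v_smulA, v_smulA, v_J, 𝓕.toKGPre.J_add, 𝓕.toKGPre.J_smulA, 𝓕.toKGPre.J_smulA,
    smul_add]
  have ha : 𝓕.toKGPre.act x f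
      = 𝓕.toKGPre.act (𝓕.h x) f + 𝓕.toKGPre.act (𝓕.v x) f := by
    rw [← 𝓕.toKGPre.act_addV, hv_add]
  rw [ha, add_smul]
  abel

lemma sgm_smul (f : A) (y : V) :
    sgm 𝓕 (f • y) = f • sgm 𝓕 y - 𝓕.toKGPre.act 𝓕.S f • 𝓕.v y := by
  simp only [sgm]
  rw [v_smulA, lie_smul_left 𝓕]

lemma Ber_leibniz (x : V) (f : A) (y : V) :
    Ber 𝓕 x (f • y) = 𝓕.toKGPre.act x f • y + f • Ber 𝓕 x y := by
  simp only [Ber]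
  rw [nab_leibniz, sgm_smul, nab_sub_right, nab_leibniz, nab_leibniz, nab_v_right,
    smul_zero, J_v, smul_zero, add_zero, sub_zero, J_sgm, 𝓕.F_add, 𝓕.F_smulA,
    𝓕.F_smulA, F_J']
  have hy : 𝓕.toKGPre.act x f • y
      = 𝓕.toKGPre.act x f • 𝓕.h y + 𝓕.toKGPre.act x f • 𝓕.v y := by
    rw [← smul_add, hv_add]
  rw [hy, smul_add]
  abel

/-- `Ber` satisfies all the Berwald axioms. -/
lemma Ber_axioms : BerwaldAxioms 𝓕 (Ber 𝓕) :=
  ⟨⟨Ber_add_left 𝓕, Ber_smul_left 𝓕, Ber_add_right 𝓕, Ber_leibniz 𝓕⟩,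
    Ber_a 𝓕, Ber_b 𝓕, Ber_c 𝓕, Ber_d 𝓕, Ber_e 𝓕⟩

/-! #### Uniqueness: any connection satisfying the axioms is pinned down -/

variable (D : V → V → V)

lemma D_zero (hD : BerwaldAxioms 𝓕 D) (η : V) : D η 0 = 0 :=
  amap_zero (hD.1.add_right η)

lemma D_neg (hD : BerwaldAxioms 𝓕 D) (η x : V) : D η (-x) = -D η x :=
  amap_neg (hD.1.add_right η) x

lemma D_half (hD : BerwaldAxioms 𝓕 D) (η y : V) :
    D η ((2:ℝ)⁻¹ • y) = (2:ℝ)⁻¹ • D η y := by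
  have hxy : (2:ℝ)⁻¹ • y + (2:ℝ)⁻¹ • y = y := half_half y
  calc D η ((2:ℝ)⁻¹ • y) = (2:ℝ)⁻¹ • ((2:ℝ) • D η ((2:ℝ)⁻¹ • y)) := by
        rw [smul_smul]; norm_num
    _ = (2:ℝ)⁻¹ • (D η ((2:ℝ)⁻¹ • y) + D η ((2:ℝ)⁻¹ • y)) := by rw [two_smul]
    _ = (2:ℝ)⁻¹ • D η y := by rw [← hD.1.add_right, hxy]

lemma D_h (hD : BerwaldAxioms 𝓕 D) (η x : V) : D η (𝓕.h x) = 𝓕.h (D η x) := by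
  rw [h_def, h_def, D_half 𝓕 D hD, hD.1.add_right, hD.2.2.2.1]

lemma D_v (hD : BerwaldAxioms 𝓕 D) (η x : V) : D η (𝓕.v x) = 𝓕.v (D η x) := by
  rw [v_def, v_def, D_half 𝓕 D hD, amap_sub (hD.1.add_right η), hD.2.2.2.1]

/-- `D x (Jy)` is pinned down by the axioms. -/
lemma pinJ (hD : BerwaldAxioms 𝓕 D) (ζ ξ : V) :
    D ζ (𝓕.toKGPre.J ξ)
      = 𝓕.toKGPre.J ⁅𝓕.toKGPre.J ξ, sgm 𝓕 ζ⁆ - 𝓕.v ⁅𝓕.toKGPre.J ξ, ζ⁆ := by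
  have htor := hD.2.2.2.2.2 ξ ζ
  simp only [Tor] at htor
  have hval : D (𝓕.toKGPre.J ξ) ζ
      = 𝓕.h ⁅𝓕.toKGPre.J ξ, ζ⁆ + 𝓕.toKGPre.J ⁅𝓕.toKGPre.J ξ, sgm 𝓕 ζ⁆ := by
    have hh : 𝓕.h (D (𝓕.toKGPre.J ξ) ζ) = 𝓕.h ⁅𝓕.toKGPre.J ξ, ζ⁆ := by
      rw [← F_J' 𝓕 (D (𝓕.toKGPre.J ξ) ζ), ← hD.2.1 (𝓕.toKGPre.J ξ) ζ,
        hD.2.2.2.2.1 ξ ζ, F_J']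
    have hv2 : 𝓕.v (D (𝓕.toKGPre.J ξ) ζ)
        = 𝓕.toKGPre.J ⁅𝓕.toKGPre.J ξ, sgm 𝓕 ζ⁆ := by
      rw [← D_v 𝓕 D hD (𝓕.toKGPre.J ξ) ζ]
      have hvz : 𝓕.v ζ = 𝓕.toKGPre.J (sgm 𝓕 ζ) := (J_sgm 𝓕 ζ).symm
      rw [hvz, hD.2.2.2.2.1 ξ (sgm 𝓕 ζ)]
    calc D (𝓕.toKGPre.J ξ) ζ
        = 𝓕.h (D (𝓕.toKGPre.J ξ) ζ) + 𝓕.v (D (𝓕.toKGPre.J ξ) ζ) := (hv_add 𝓕 _).symm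
      _ = _ := by rw [hh, hv2]
  rw [hval, sub_sub, sub_eq_zero] at htor
  have hsolve := eq_sub_of_add_eq htor.symm
  rw [hsolve, h_eq]
  abel

/-- `D` is completely pinned down by the axioms. -/
lemma pin (hD : BerwaldAxioms 𝓕 D) (ζ ξ : V) :
    D ζ ξ = 𝓕.F (𝓕.toKGPre.J ⁅𝓕.toKGPre.J ξ, sgm 𝓕 ζ⁆ - 𝓕.v ⁅𝓕.toKGPre.J ξ, ζ⁆)
      + (𝓕.toKGPre.J ⁅𝓕.v ξ, sgm 𝓕 ζ⁆ - 𝓕.v ⁅𝓕.v ξ, ζ⁆) := by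
  have hhpart : D ζ (𝓕.h ξ)
      = 𝓕.F (𝓕.toKGPre.J ⁅𝓕.toKGPre.J ξ, sgm 𝓕 ζ⁆ - 𝓕.v ⁅𝓕.toKGPre.J ξ, ζ⁆) := by
    have hv0 : 𝓕.v (D ζ (𝓕.h ξ)) = 0 := by
      rw [← D_v 𝓕 D hD ζ (𝓕.h ξ), v_h, D_zero 𝓕 D hD ζ]
    have hh0 : 𝓕.h (D ζ (𝓕.h ξ))
        = 𝓕.F (𝓕.toKGPre.J ⁅𝓕.toKGPre.J ξ, sgm 𝓕 ζ⁆ - 𝓕.v ⁅𝓕.toKGPre.J ξ, ζ⁆) := by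
      rw [← F_J' 𝓕 (D ζ (𝓕.h ξ)), ← hD.2.1 ζ (𝓕.h ξ), J_h, pinJ 𝓕 D hD ζ ξ]
    calc D ζ (𝓕.h ξ) = 𝓕.h (D ζ (𝓕.h ξ)) + 𝓕.v (D ζ (𝓕.h ξ)) := (hv_add 𝓕 _).symm
      _ = _ := by rw [hh0, hv0, add_zero]
  have hvpart : D ζ (𝓕.v ξ)
      = 𝓕.toKGPre.J ⁅𝓕.v ξ, sgm 𝓕 ζ⁆ - 𝓕.v ⁅𝓕.v ξ, ζ⁆ := by
    have hvz : 𝓕.v ξ = 𝓕.toKGPre.J (sgm 𝓕 ξ) := (J_sgm 𝓕 ξ).symm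
    rw [hvz, pinJ 𝓕 D hD ζ (sgm 𝓕 ξ)]
  calc D ζ ξ = D ζ (𝓕.h ξ + 𝓕.v ξ) := by rw [hv_add]
    _ = D ζ (𝓕.h ξ) + D ζ (𝓕.v ξ) := hD.1.add_right ζ _ _
    _ = _ := by rw [hhpart, hvpart]

/-! #### Part 2: the axioms imply the explicit Berwald formulas -/

lemma part2 (hD : BerwaldAxioms 𝓕 D) : 𝓕.IsBerwaldConn D := by
  refine ⟨hD.1, hD.2.2.2.2.1, ?_, ?_⟩
  · intro ζ ξ
    rw [pinJ 𝓕 D hD (𝓕.h ζ) ξ]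
    have hs : sgm 𝓕 (𝓕.h ζ) = 0 := by
      simp only [sgm]; rw [v_h, zero_lie]
    rw [hs, lie_zero, J_zero, zero_sub, lflip (𝓕.h ζ) (𝓕.toKGPre.J ξ), v_neg]
  · intro ζ ξ
    have Dneg := D_neg 𝓕 D hD ζ
    have hFξ : 𝓕.F ξ = -𝓕.toKGPre.J ξ + 𝓕.h (sgm 𝓕 ξ) := by
      conv_lhs => rw [← hv_add 𝓕 ξ]
      rw [𝓕.F_add, F_h', F_vert 𝓕 (J_v 𝓕 ξ)]
      simp only [sgm]
    have hFD : 𝓕.F (D ζ ξ)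
        = -𝓕.toKGPre.J (D ζ ξ) + 𝓕.h ⁅𝓕.v (D ζ ξ), 𝓕.S⁆ := by
      conv_lhs => rw [← hv_add 𝓕 (D ζ ξ)]
      rw [𝓕.F_add, F_h', F_vert 𝓕 (J_v 𝓕 (D ζ ξ))]
    have hkey : 𝓕.h (D ζ (sgm 𝓕 ξ)) = 𝓕.h ⁅𝓕.v (D ζ ξ), 𝓕.S⁆ := by
      rw [← F_J' 𝓕 (D ζ (sgm 𝓕 ξ)), ← F_J' 𝓕 ⁅𝓕.v (D ζ ξ), 𝓕.S⁆]
      congr 1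
      rw [vert_JS 𝓕 (J_v 𝓕 (D ζ ξ)), ← hD.2.1 ζ (sgm 𝓕 ξ), J_sgm, D_v 𝓕 D hD ζ ξ]
    rw [hFξ, hD.1.add_right, Dneg, hD.2.1 ζ ξ, D_h 𝓕 D hD ζ (sgm 𝓕 ξ), hkey, hFD]

end BerwaldAux


/-- **Berwald connection.** On a Finsler manifold `(M,E)` there is a
unique linear connection `D°` on `TM` satisfying (a)–(e); it is given explicitly by
`D°_{Jζ}Jξ = J[Jζ,ξ]`, `D°_{hζ}Jξ = v[hζ,Jξ]` and `D°F = 0`. -/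
theorem berwald_existence_uniqueness (𝔉 : FinslerKG A V) :
    (∃! D : V → V → V, BerwaldAxioms 𝔉 D) ∧
    (∀ D : V → V → V, BerwaldAxioms 𝔉 D → 𝔉.IsBerwaldConn D) := by
  constructor
  · refine ⟨BerwaldAux.Ber 𝔉, BerwaldAux.Ber_axioms 𝔉, ?_⟩
    intro D hD
    funext ζ ξ
    rw [BerwaldAux.pin 𝔉 D hD ζ ξ,
      ← BerwaldAux.pin 𝔉 (BerwaldAux.Ber 𝔉) (BerwaldAux.Ber_axioms 𝔉) ζ ξ]
  · exact fun D hD => BerwaldAux.part2 𝔉 D hD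


end Statement
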